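/- Let M, N be positive integers and let r be a real number with 1 ≤ r ≤ M. Then max{(N − r)/M + 1, 1} ≤ 2·N/min{M, N}; that is, the achievable partial-offloading NDLT is within a multiplicative factor of 2 of the lower bound N/min{M,N}. -/
import Mathlib


/-- For positive integers `M, N` and any real `1 ≤ r ≤ M`,
`max{(N − r)/M + 1, 1} ≤ 2·N/min{M, N}`: the achievable partial-offloading NDLT is
within a multiplicative factor of 2 of the lower bound `N/min{M,N}`. -/
theorem stmt_14 (M N : ℕ) (hM : 0 < M) (hN : 0 < N)
    (r : ℝ) (hr1 : 1 ≤ r) (hrM : r ≤ (M : ℝ)) :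
    max (((N : ℝ) - r) / M + 1) 1 ≤ 2 * ((N : ℝ) / min (M : ℝ) (N : ℝ)) := by
  have hM0 : (0 : ℝ) < M := by exact_mod_cast hM
  have hN0 : (0 : ℝ) < N := by exact_mod_cast hN
  rcases le_total (M : ℝ) (N : ℝ) with h | h
  · rw [min_eq_left h]
    have hrhs : (2 : ℝ) ≤ 2 * ((N : ℝ) / M) := by
      have : (1 : ℝ) ≤ (N : ℝ) / M := (one_le_div hM0).mpr h
      linarith
    apply max_le _ (by linarith)
    have h1 : ((N : ℝ) - r) / M ≤ (N : ℝ) / M := by gcongr <;> linarith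
    have h2 : (1 : ℝ) ≤ (N : ℝ) / M := (one_le_div hM0).mpr h
    linarith
  · rw [min_eq_right h, div_self hN0.ne', mul_one]
    apply max_le _ (by norm_num)
    have : ((N : ℝ) - r) / M ≤ 1 := by
      rw [div_le_one hM0]; linarith
    linarith
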